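/- For every real number x ≠ 0, cosh(x) + 5·(cosh x)⁻³ − 6·(cosh x)⁻⁵ − 6x·(3·b₋₅(x) − 2·b₋₃(x)) > 0, where b₋₃(x) = (1/2)[arctan(sinh x) + sinh(x)·(cosh x)⁻²] and b₋₅(x) = (1/8)[3·arctan(sinh x) + 2·sinh(x)·(cosh x)⁻⁴ + 3·sinh(x)·(cosh x)⁻²]. -/
import Mathlib

open Real

lemma cosh_ge_quad {t : ℝ} (ht : 0 ≤ t) : 1 + t ^ 2 / 2 ≤ Real.cosh t := by
  have h1 : t / 2 ≤ Real.sinh (t / 2) := Real.self_le_sinh_iff.2 (by linarith)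
  have h2 : Real.cosh t = Real.cosh (t/2) ^ 2 + Real.sinh (t/2) ^ 2 := by
    rw [← Real.cosh_two_mul]; ring_nf
  have h3 : Real.sinh (t/2) ^ 2 = Real.cosh (t/2) ^ 2 - 1 := Real.sinh_sq _
  nlinarith [h1, Real.one_le_cosh (t/2)]

lemma sinh_ge_cube {t : ℝ} (ht : 0 ≤ t) : t + t ^ 3 / 8 ≤ Real.sinh t := by
  have h1 : t / 2 ≤ Real.sinh (t / 2) := Real.self_le_sinh_iff.2 (by linarith)
  have h2 : 1 + (t/2) ^ 2 / 2 ≤ Real.cosh (t/2) := cosh_ge_quad (by linarith)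
  have h3 : Real.sinh t = 2 * Real.sinh (t/2) * Real.cosh (t/2) := by
    rw [← Real.sinh_two_mul]; ring_nf
  nlinarith [h1, h2, Real.one_le_cosh (t/2)]

lemma cosh_ge_quart {t : ℝ} (ht : 0 ≤ t) :
    1 + t ^ 2 / 2 + t ^ 4 / 32 + t ^ 6 / 2048 ≤ Real.cosh t := by
  have h1 : t / 2 + (t/2) ^ 3 / 8 ≤ Real.sinh (t / 2) := sinh_ge_cube (by linarith)
  have h2 : Real.cosh t = Real.cosh (t/2) ^ 2 + Real.sinh (t/2) ^ 2 := by
    rw [← Real.cosh_two_mul]; ring_nf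
  have h3 : Real.sinh (t/2) ^ 2 = Real.cosh (t/2) ^ 2 - 1 := Real.sinh_sq _
  have hp : 0 ≤ t / 2 + (t/2) ^ 3 / 8 := by positivity
  have hsn : 0 ≤ Real.sinh (t/2) := Real.sinh_nonneg_iff.2 (by linarith)
  have hsq : (t / 2 + (t/2) ^ 3 / 8) ^ 2 ≤ Real.sinh (t/2) ^ 2 := by
    exact pow_le_pow_left₀ hp h1 2
  nlinarith [hsq]

lemma arctan_sinh_lt {x : ℝ} (hx : 0 < x) :
    Real.arctan (Real.sinh x) < 2 * Real.sinh x / (1 + Real.cosh x) := by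
  set s := Real.sinh x with hs
  set c := Real.cosh x with hc
  have hs0 : 0 < s := Real.sinh_pos_iff.2 hx
  have hc0 : 0 < c := Real.cosh_pos x
  have hA0 : 0 < Real.arctan s := by
    rw [← Real.arctan_zero]; exact Real.arctan_strictMono hs0
  have hA2 : Real.arctan s < π / 2 := Real.arctan_lt_pi_div_two s
  have hsqrt : Real.sqrt (1 + s ^ 2) = c := by
    rw [show 1 + s ^ 2 = c ^ 2 by nlinarith [Real.sinh_sq x]]
    exact Real.sqrt_sq hc0.le
  have hsin : Real.sin (Real.arctan s) = s / c := by rw [Real.sin_arctan, hsqrt]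
  have hcos : Real.cos (Real.arctan s) = 1 / c := by rw [Real.cos_arctan, hsqrt]
  set u := Real.arctan s / 2 with hu
  have hu0 : 0 < u := by positivity
  have hu2 : u < π / 2 := by
    have := Real.pi_pos; simp only [hu]; linarith
  have hcu : 0 < Real.cos u := Real.cos_pos_of_mem_Ioo ⟨by linarith, hu2⟩
  have hsin2 : Real.sin (2 * u) = s / c := by rw [show 2 * u = Real.arctan s by ring] at *; exact hsin
  have hcos2 : Real.cos (2 * u) = 1 / c := by rw [show 2 * u = Real.arctan s by ring]; exact hcos
  rw [Real.sin_two_mul] at hsin2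
  rw [Real.cos_two_mul] at hcos2
  have e1 : 2 * Real.sin u * Real.cos u * c = s := by
    field_simp at hsin2; linarith
  have e2 : 2 * Real.cos u ^ 2 * c = 1 + c := by
    field_simp at hcos2; linarith
  have h1c : (0:ℝ) < 1 + c := by positivity
  have htan : Real.tan u = s / (1 + c) := by
    rw [Real.tan_eq_sin_div_cos, div_eq_div_iff hcu.ne' h1c.ne']
    linear_combination Real.cos u * e1 - Real.sin u * e2
  have hlt : u < Real.tan u := Real.lt_tan hu0 hu2
  rw [htan] at hlt
  have harc : Real.arctan s = 2 * u := by rw [hu]; ring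
  rw [harc, show 2 * s / (1 + c) = 2 * (s / (1 + c)) by ring]
  linarith

set_option maxHeartbeats 1000000 in
lemma reg_poly_0 {c : ℝ} (h1 : (7/5 : ℝ) ≤ c) (h2 : c ≤ (749/500 : ℝ)) :
    0 < 2*(1049/1000 : ℝ)*(4*c^6*(1+c) + 20*c^2*(1+c) - 24*(1+c))
      - (97/100 : ℝ)*(c^2 - 1 + (1049/1000 : ℝ)^2)*(6*c^5 + 18*c*(1+c) + 3*c^3*(1+c)) := by
  have hc0 : (0:ℝ) ≤ c := by linarith
  nlinarith [mul_nonneg (sub_nonneg.2 h1) (sub_nonneg.2 h2), sq_nonneg (c - (1449/1000 : ℝ)),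
    mul_nonneg (mul_nonneg (sub_nonneg.2 h1) (sub_nonneg.2 h2)) hc0,
    mul_nonneg (mul_nonneg (mul_nonneg (sub_nonneg.2 h1) (sub_nonneg.2 h2)) hc0) hc0,
    mul_nonneg (mul_nonneg (mul_nonneg (mul_nonneg (sub_nonneg.2 h1) (sub_nonneg.2 h2)) hc0) hc0) hc0]

set_option maxHeartbeats 1000000 in
lemma reg_poly_1 {c : ℝ} (h1 : (749/500 : ℝ) ≤ c) (h2 : c ≤ (1589/1000 : ℝ)) :
    0 < 2*(147/125 : ℝ)*(4*c^6*(1+c) + 20*c^2*(1+c) - 24*(1+c))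
      - (21/20 : ℝ)*(c^2 - 1 + (147/125 : ℝ)^2)*(6*c^5 + 18*c*(1+c) + 3*c^3*(1+c)) := by
  have hc0 : (0:ℝ) ≤ c := by linarith
  nlinarith [mul_nonneg (sub_nonneg.2 h1) (sub_nonneg.2 h2), sq_nonneg (c - (3087/2000 : ℝ)),
    mul_nonneg (mul_nonneg (sub_nonneg.2 h1) (sub_nonneg.2 h2)) hc0,
    mul_nonneg (mul_nonneg (mul_nonneg (sub_nonneg.2 h1) (sub_nonneg.2 h2)) hc0) hc0,
    mul_nonneg (mul_nonneg (mul_nonneg (mul_nonneg (sub_nonneg.2 h1) (sub_nonneg.2 h2)) hc0) hc0) hc0]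

set_option maxHeartbeats 1000000 in
lemma reg_poly_2 {c : ℝ} (h1 : (1589/1000 : ℝ) ≤ c) (h2 : c ≤ (169/100 : ℝ)) :
    0 < 2*(1299/1000 : ℝ)*(4*c^6*(1+c) + 20*c^2*(1+c) - 24*(1+c))
      - (113/100 : ℝ)*(c^2 - 1 + (1299/1000 : ℝ)^2)*(6*c^5 + 18*c*(1+c) + 3*c^3*(1+c)) := by
  have hc0 : (0:ℝ) ≤ c := by linarith
  nlinarith [mul_nonneg (sub_nonneg.2 h1) (sub_nonneg.2 h2), sq_nonneg (c - (3279/2000 : ℝ)),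
    mul_nonneg (mul_nonneg (sub_nonneg.2 h1) (sub_nonneg.2 h2)) hc0,
    mul_nonneg (mul_nonneg (mul_nonneg (sub_nonneg.2 h1) (sub_nonneg.2 h2)) hc0) hc0,
    mul_nonneg (mul_nonneg (mul_nonneg (mul_nonneg (sub_nonneg.2 h1) (sub_nonneg.2 h2)) hc0) hc0) hc0]

set_option maxHeartbeats 1000000 in
lemma reg_poly_3 {c : ℝ} (h1 : (169/100 : ℝ) ≤ c) (h2 : c ≤ (893/500 : ℝ)) :
    0 < 2*(1421/1000 : ℝ)*(4*c^6*(1+c) + 20*c^2*(1+c) - 24*(1+c))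
      - (6/5 : ℝ)*(c^2 - 1 + (1421/1000 : ℝ)^2)*(6*c^5 + 18*c*(1+c) + 3*c^3*(1+c)) := by
  have hc0 : (0:ℝ) ≤ c := by linarith
  nlinarith [mul_nonneg (sub_nonneg.2 h1) (sub_nonneg.2 h2), sq_nonneg (c - (869/500 : ℝ)),
    mul_nonneg (mul_nonneg (sub_nonneg.2 h1) (sub_nonneg.2 h2)) hc0,
    mul_nonneg (mul_nonneg (mul_nonneg (sub_nonneg.2 h1) (sub_nonneg.2 h2)) hc0) hc0,
    mul_nonneg (mul_nonneg (mul_nonneg (mul_nonneg (sub_nonneg.2 h1) (sub_nonneg.2 h2)) hc0) hc0) hc0]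

set_option maxHeartbeats 1000000 in
lemma reg_poly_4 {c : ℝ} (h1 : (893/500 : ℝ) ≤ c) (h2 : c ≤ (381/200 : ℝ)) :
    0 < 2*(1551/1000 : ℝ)*(4*c^6*(1+c) + 20*c^2*(1+c) - 24*(1+c))
      - (32/25 : ℝ)*(c^2 - 1 + (1551/1000 : ℝ)^2)*(6*c^5 + 18*c*(1+c) + 3*c^3*(1+c)) := by
  have hc0 : (0:ℝ) ≤ c := by linarith
  nlinarith [mul_nonneg (sub_nonneg.2 h1) (sub_nonneg.2 h2), sq_nonneg (c - (3691/2000 : ℝ)),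
    mul_nonneg (mul_nonneg (sub_nonneg.2 h1) (sub_nonneg.2 h2)) hc0,
    mul_nonneg (mul_nonneg (mul_nonneg (sub_nonneg.2 h1) (sub_nonneg.2 h2)) hc0) hc0,
    mul_nonneg (mul_nonneg (mul_nonneg (mul_nonneg (sub_nonneg.2 h1) (sub_nonneg.2 h2)) hc0) hc0) hc0]

set_option maxHeartbeats 1000000 in
lemma reg_poly_5 {c : ℝ} (h1 : (381/200 : ℝ) ≤ c) (h2 : c ≤ (1017/500 : ℝ)) :
    0 < 2*(1697/1000 : ℝ)*(4*c^6*(1+c) + 20*c^2*(1+c) - 24*(1+c))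
      - (34/25 : ℝ)*(c^2 - 1 + (1697/1000 : ℝ)^2)*(6*c^5 + 18*c*(1+c) + 3*c^3*(1+c)) := by
  have hc0 : (0:ℝ) ≤ c := by linarith
  nlinarith [mul_nonneg (sub_nonneg.2 h1) (sub_nonneg.2 h2), sq_nonneg (c - (3939/2000 : ℝ)),
    mul_nonneg (mul_nonneg (sub_nonneg.2 h1) (sub_nonneg.2 h2)) hc0,
    mul_nonneg (mul_nonneg (mul_nonneg (sub_nonneg.2 h1) (sub_nonneg.2 h2)) hc0) hc0,
    mul_nonneg (mul_nonneg (mul_nonneg (mul_nonneg (sub_nonneg.2 h1) (sub_nonneg.2 h2)) hc0) hc0) hc0]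

set_option maxHeartbeats 1000000 in
lemma reg_poly_6 {c : ℝ} (h1 : (1017/500 : ℝ) ≤ c) (h2 : c ≤ (2193/1000 : ℝ)) :
    0 < 2*(931/500 : ℝ)*(4*c^6*(1+c) + 20*c^2*(1+c) - 24*(1+c))
      - (29/20 : ℝ)*(c^2 - 1 + (931/500 : ℝ)^2)*(6*c^5 + 18*c*(1+c) + 3*c^3*(1+c)) := by
  have hc0 : (0:ℝ) ≤ c := by linarith
  nlinarith [mul_nonneg (sub_nonneg.2 h1) (sub_nonneg.2 h2), sq_nonneg (c - (4227/2000 : ℝ)),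
    mul_nonneg (mul_nonneg (sub_nonneg.2 h1) (sub_nonneg.2 h2)) hc0,
    mul_nonneg (mul_nonneg (mul_nonneg (sub_nonneg.2 h1) (sub_nonneg.2 h2)) hc0) hc0,
    mul_nonneg (mul_nonneg (mul_nonneg (mul_nonneg (sub_nonneg.2 h1) (sub_nonneg.2 h2)) hc0) hc0) hc0]

set_option maxHeartbeats 1000000 in
lemma reg_poly_7 {c : ℝ} (h1 : (2193/1000 : ℝ) ≤ c) (h2 : c ≤ (2429/1000 : ℝ)) :
    0 < 2*(2083/1000 : ℝ)*(4*c^6*(1+c) + 20*c^2*(1+c) - 24*(1+c))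
      - (157/100 : ℝ)*(c^2 - 1 + (2083/1000 : ℝ)^2)*(6*c^5 + 18*c*(1+c) + 3*c^3*(1+c)) := by
  have hc0 : (0:ℝ) ≤ c := by linarith
  nlinarith [mul_nonneg (sub_nonneg.2 h1) (sub_nonneg.2 h2), sq_nonneg (c - (2311/1000 : ℝ)),
    mul_nonneg (mul_nonneg (sub_nonneg.2 h1) (sub_nonneg.2 h2)) hc0,
    mul_nonneg (mul_nonneg (mul_nonneg (sub_nonneg.2 h1) (sub_nonneg.2 h2)) hc0) hc0,
    mul_nonneg (mul_nonneg (mul_nonneg (mul_nonneg (sub_nonneg.2 h1) (sub_nonneg.2 h2)) hc0) hc0) hc0]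

set_option maxHeartbeats 1000000 in
lemma reg_poly_8 {c : ℝ} (h1 : (2429/1000 : ℝ) ≤ c) (h2 : c ≤ (2813/1000 : ℝ)) :
    0 < 2*(2423/1000 : ℝ)*(4*c^6*(1+c) + 20*c^2*(1+c) - 24*(1+c))
      - (87/50 : ℝ)*(c^2 - 1 + (2423/1000 : ℝ)^2)*(6*c^5 + 18*c*(1+c) + 3*c^3*(1+c)) := by
  have hc0 : (0:ℝ) ≤ c := by linarith
  nlinarith [mul_nonneg (sub_nonneg.2 h1) (sub_nonneg.2 h2), sq_nonneg (c - (2621/1000 : ℝ)),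
    mul_nonneg (mul_nonneg (sub_nonneg.2 h1) (sub_nonneg.2 h2)) hc0,
    mul_nonneg (mul_nonneg (mul_nonneg (sub_nonneg.2 h1) (sub_nonneg.2 h2)) hc0) hc0,
    mul_nonneg (mul_nonneg (mul_nonneg (mul_nonneg (sub_nonneg.2 h1) (sub_nonneg.2 h2)) hc0) hc0) hc0]

set_option maxHeartbeats 1000000 in
lemma reg_poly_9 {c : ℝ} (h1 : (2813/1000 : ℝ) ≤ c) (h2 : c ≤ (3 : ℝ)) :
    0 < 2*(2729/1000 : ℝ)*(4*c^6*(1+c) + 20*c^2*(1+c) - 24*(1+c))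
      - (2 : ℝ)*(c^2 - 1 + (2729/1000 : ℝ)^2)*(6*c^5 + 18*c*(1+c) + 3*c^3*(1+c)) := by
  have hc0 : (0:ℝ) ≤ c := by linarith
  nlinarith [mul_nonneg (sub_nonneg.2 h1) (sub_nonneg.2 h2), sq_nonneg (c - (5813/2000 : ℝ)),
    mul_nonneg (mul_nonneg (sub_nonneg.2 h1) (sub_nonneg.2 h2)) hc0,
    mul_nonneg (mul_nonneg (mul_nonneg (sub_nonneg.2 h1) (sub_nonneg.2 h2)) hc0) hc0,
    mul_nonneg (mul_nonneg (mul_nonneg (mul_nonneg (sub_nonneg.2 h1) (sub_nonneg.2 h2)) hc0) hc0) hc0]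

set_option maxHeartbeats 1000000 in
lemma final_reg_poly {c : ℝ} (h1 : (3:ℝ) ≤ c) :
    0 < 4*c^6*(1+c) + 20*c^2*(1+c) - 24*(1+c) - 2*c*(6*c^5 + 18*c*(1+c) + 3*c^3*(1+c)) := by
  have hc0 : (0:ℝ) < c := by linarith
  nlinarith [sq_nonneg (c-3), pow_pos hc0 5,
    mul_nonneg (mul_nonneg (sub_nonneg.2 h1) hc0.le) hc0.le,
    mul_nonneg (sub_nonneg.2 h1) (sq_nonneg c), sq_nonneg c,
    mul_nonneg (mul_nonneg (mul_nonneg (mul_nonneg (sub_nonneg.2 h1) hc0.le) hc0.le) hc0.le) hc0.le]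

set_option maxHeartbeats 1000000 in
lemma tail_poly {c x : ℝ} (hc : (7389/2000:ℝ) < c) (hx2 : 2 < x) (hxb : x ≤ 2000/7389*c + 1) :
    0 < 4*c^6*(1+c) + 20*c^2*(1+c) - 24*(1+c) - x*c*(6*c^5 + 18*c*(1+c) + 3*c^3*(1+c)) := by
  have hc0 : (0:ℝ) < c := by linarith
  nlinarith [mul_le_mul_of_nonneg_right hxb (by positivity : (0:ℝ) ≤ c^6),
    mul_le_mul_of_nonneg_right hxb (by positivity : (0:ℝ) ≤ c^5),
    mul_le_mul_of_nonneg_right hxb (by positivity : (0:ℝ) ≤ c^4),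
    mul_le_mul_of_nonneg_right hxb (by positivity : (0:ℝ) ≤ c^3),
    mul_le_mul_of_nonneg_right hxb (by positivity : (0:ℝ) ≤ c^2),
    pow_pos hc0 6, pow_pos hc0 5, pow_pos hc0 4, pow_pos hc0 3, sq_nonneg c, hc0,
    mul_pos (pow_pos hc0 6) (show (0:ℝ) < c - 7389/2000 + 1 by linarith)]

set_option maxHeartbeats 1000000 in
lemma regA_poly {c : ℝ} (h1 : 1 < c) (h2 : c ≤ 7/5) :
    0 < 24 + 30*c - 8*c^2 - 13*c^3 + 2*c^4 - c^5 - 2*c^6 := by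
  have hc0 : (0:ℝ) ≤ c := by linarith
  nlinarith [mul_nonneg (sub_nonneg.2 h1.le) (sub_nonneg.2 h2), sq_nonneg (c-6/5),
    mul_nonneg (mul_nonneg (sub_nonneg.2 h1.le) (sub_nonneg.2 h2)) hc0,
    mul_nonneg (mul_nonneg (mul_nonneg (sub_nonneg.2 h1.le) (sub_nonneg.2 h2)) hc0) hc0,
    sq_nonneg (c-1), sq_nonneg (c+1)]

noncomputable def bm3 (x : ℝ) : ℝ :=
  (1 / 2) * (Real.arctan (Real.sinh x) + Real.sinh x * (Real.cosh x)⁻¹ ^ 2)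

noncomputable def bm5 (x : ℝ) : ℝ :=
  (1 / 8) * (3 * Real.arctan (Real.sinh x) + 2 * Real.sinh x * (Real.cosh x)⁻¹ ^ 4
    + 3 * Real.sinh x * (Real.cosh x)⁻¹ ^ 2)

lemma cosh_arg_le {x X C : ℝ} (hx : 0 < x) (hX : 0 ≤ X) (hcC : Real.cosh x ≤ C)
    (h : C ≤ 1 + X ^ 2 / 2 + X ^ 4 / 32 + X ^ 6 / 2048) : x ≤ X := by
  have h2 : Real.cosh x ≤ Real.cosh X := le_trans hcC (le_trans h (cosh_ge_quart hX))
  have h3 := Real.cosh_le_cosh.1 h2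
  rwa [abs_of_pos hx, abs_of_nonneg hX] at h3

set_option maxHeartbeats 1000000 in
lemma region_step {c s x X b : ℝ} (hc0 : 0 < c) (hs0 : 0 < s) (hx : 0 < x)
    (hs2 : s ^ 2 = c ^ 2 - 1) (hb : 0 < b) (hxX : x ≤ X)
    (hpoly : 0 < 2*b*(4*c^6*(1+c) + 20*c^2*(1+c) - 24*(1+c))
      - X*(c^2 - 1 + b^2)*(6*c^5 + 18*c*(1+c) + 3*c^3*(1+c))) :
    0 < 4*c^6*(1+c) + 20*c^2*(1+c) - 24*(1+c)
      - x*s*(6*c^5 + 18*c*(1+c) + 3*c^3*(1+c)) := by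
  have hKpos : (0:ℝ) < 6*c^5 + 18*c*(1+c) + 3*c^3*(1+c) := by positivity
  have hX0 : 0 < X := lt_of_lt_of_le hx hxX
  have h4 : 2*b*s ≤ c^2 - 1 + b^2 := by nlinarith [sq_nonneg (s - b)]
  have h8 : 2*b*(x*s) ≤ X*(c^2 - 1 + b^2) := by
    nlinarith [mul_nonneg (mul_nonneg (sub_nonneg.2 hxX) hs0.le) hb.le,
      mul_le_mul_of_nonneg_left h4 hX0.le]
  have h9 : 0 ≤ (X*(c^2 - 1 + b^2) - 2*b*(x*s)) * (6*c^5 + 18*c*(1+c) + 3*c^3*(1+c)) :=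
    mul_nonneg (by linarith) hKpos.le
  nlinarith [hpoly, h9, hb]

set_option maxHeartbeats 1000000 in
lemma key_poly {c s x : ℝ} (hx : 0 < x) (hc1 : 1 < c) (hs0 : 0 < s)
    (hs2 : s ^ 2 = c ^ 2 - 1) (hxs : x < s) (hcosh : c = Real.cosh x) :
    0 < 4*c^6*(1+c) + 20*c^2*(1+c) - 24*(1+c)
      - x*s*(6*c^5 + 18*c*(1+c) + 3*c^3*(1+c)) := by
  have hc0 : (0:ℝ) < c := by linarith
  have hKpos : (0:ℝ) < 6*c^5 + 18*c*(1+c) + 3*c^3*(1+c) := by positivity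
  have hsc : s < c := by nlinarith
  rcases le_or_gt x 2 with hx2 | hx2
  · rcases le_or_gt c (7/5 : ℝ) with hcb | hca
    · -- region A
      have hq : (0:ℝ) < (c - 1) * (24 + 30*c - 8*c^2 - 13*c^3 + 2*c^4 - c^5 - 2*c^6) :=
        mul_pos (by linarith) (regA_poly hc1 hcb)
      have hs' : 0 ≤ (c^2 - 1 - x*s) * (6*c^5 + 18*c*(1+c) + 3*c^3*(1+c)) := by
        apply mul_nonneg _ hKpos.le
        nlinarith [mul_lt_mul_of_pos_right hxs hs0]
      nlinarith [hq, hs']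
    · have hlo : (7/5 : ℝ) ≤ c := hca.le
      rcases le_or_gt c (749/500 : ℝ) with hcb | hca
      · have hxX : x ≤ (97/100 : ℝ) := cosh_arg_le hx (by norm_num) (hcosh ▸ hcb) (by norm_num)
        exact region_step hc0 hs0 hx hs2 (by norm_num : (0:ℝ) < (1049/1000 : ℝ)) hxX (reg_poly_0 hlo hcb)
      · have hlo : (749/500 : ℝ) ≤ c := hca.le
        rcases le_or_gt c (1589/1000 : ℝ) with hcb | hca
        · have hxX : x ≤ (21/20 : ℝ) := cosh_arg_le hx (by norm_num) (hcosh ▸ hcb) (by norm_num)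
          exact region_step hc0 hs0 hx hs2 (by norm_num : (0:ℝ) < (147/125 : ℝ)) hxX (reg_poly_1 hlo hcb)
        · have hlo : (1589/1000 : ℝ) ≤ c := hca.le
          rcases le_or_gt c (169/100 : ℝ) with hcb | hca
          · have hxX : x ≤ (113/100 : ℝ) := cosh_arg_le hx (by norm_num) (hcosh ▸ hcb) (by norm_num)
            exact region_step hc0 hs0 hx hs2 (by norm_num : (0:ℝ) < (1299/1000 : ℝ)) hxX (reg_poly_2 hlo hcb)
          · have hlo : (169/100 : ℝ) ≤ c := hca.le
            rcases le_or_gt c (893/500 : ℝ) with hcb | hca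
            · have hxX : x ≤ (6/5 : ℝ) := cosh_arg_le hx (by norm_num) (hcosh ▸ hcb) (by norm_num)
              exact region_step hc0 hs0 hx hs2 (by norm_num : (0:ℝ) < (1421/1000 : ℝ)) hxX (reg_poly_3 hlo hcb)
            · have hlo : (893/500 : ℝ) ≤ c := hca.le
              rcases le_or_gt c (381/200 : ℝ) with hcb | hca
              · have hxX : x ≤ (32/25 : ℝ) := cosh_arg_le hx (by norm_num) (hcosh ▸ hcb) (by norm_num)
                exact region_step hc0 hs0 hx hs2 (by norm_num : (0:ℝ) < (1551/1000 : ℝ)) hxX (reg_poly_4 hlo hcb)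
              · have hlo : (381/200 : ℝ) ≤ c := hca.le
                rcases le_or_gt c (1017/500 : ℝ) with hcb | hca
                · have hxX : x ≤ (34/25 : ℝ) := cosh_arg_le hx (by norm_num) (hcosh ▸ hcb) (by norm_num)
                  exact region_step hc0 hs0 hx hs2 (by norm_num : (0:ℝ) < (1697/1000 : ℝ)) hxX (reg_poly_5 hlo hcb)
                · have hlo : (1017/500 : ℝ) ≤ c := hca.le
                  rcases le_or_gt c (2193/1000 : ℝ) with hcb | hca
                  · have hxX : x ≤ (29/20 : ℝ) := cosh_arg_le hx (by norm_num) (hcosh ▸ hcb) (by norm_num)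
                    exact region_step hc0 hs0 hx hs2 (by norm_num : (0:ℝ) < (931/500 : ℝ)) hxX (reg_poly_6 hlo hcb)
                  · have hlo : (2193/1000 : ℝ) ≤ c := hca.le
                    rcases le_or_gt c (2429/1000 : ℝ) with hcb | hca
                    · have hxX : x ≤ (157/100 : ℝ) := cosh_arg_le hx (by norm_num) (hcosh ▸ hcb) (by norm_num)
                      exact region_step hc0 hs0 hx hs2 (by norm_num : (0:ℝ) < (2083/1000 : ℝ)) hxX (reg_poly_7 hlo hcb)
                    · have hlo : (2429/1000 : ℝ) ≤ c := hca.le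
                      rcases le_or_gt c (2813/1000 : ℝ) with hcb | hca
                      · have hxX : x ≤ (87/50 : ℝ) := cosh_arg_le hx (by norm_num) (hcosh ▸ hcb) (by norm_num)
                        exact region_step hc0 hs0 hx hs2 (by norm_num : (0:ℝ) < (2423/1000 : ℝ)) hxX (reg_poly_8 hlo hcb)
                      · have hlo : (2813/1000 : ℝ) ≤ c := hca.le
                        rcases le_or_gt c (3 : ℝ) with hcb | hca
                        · have hxX : x ≤ (2 : ℝ) := cosh_arg_le hx (by norm_num) (hcosh ▸ hcb) (by norm_num)
                          exact region_step hc0 hs0 hx hs2 (by norm_num : (0:ℝ) < (2729/1000 : ℝ)) hxX (reg_poly_9 hlo hcb)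
                        · have hlo : (3 : ℝ) ≤ c := hca.le
                          -- final region : 3 ≤ c, x ≤ 2
                          have h8 : x*s ≤ 2*c := by nlinarith
                          have h9 : 0 ≤ (2*c - x*s) * (6*c^5 + 18*c*(1+c) + 3*c^3*(1+c)) := mul_nonneg (by linarith) hKpos.le
                          nlinarith [h9, final_reg_poly hlo]
  · -- tail x > 2
    have hexp : Real.exp 2 * (x - 1) ≤ Real.exp x := by
      have h1 : x - 1 ≤ Real.exp (x - 2) := by
        have := Real.add_one_le_exp (x - 2); linarith
      have h2 : Real.exp x = Real.exp 2 * Real.exp (x - 2) := by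
        rw [← Real.exp_add]; ring_nf
      rw [h2]
      exact mul_le_mul_of_nonneg_left h1 (Real.exp_pos 2).le
    have he2 : (7389/1000 : ℝ) < Real.exp 2 := by
      have h := Real.exp_one_gt_d9
      have h2 : Real.exp 2 = Real.exp 1 * Real.exp 1 := by rw [← Real.exp_add]; norm_num
      nlinarith
    have hcx : Real.exp x / 2 ≤ c := by
      rw [hcosh, Real.cosh_eq]
      have := (Real.exp_pos (-x)).le
      linarith
    have hc2 : (7389/2000 : ℝ) * (x - 1) ≤ c := by nlinarith [Real.exp_pos x]
    have hc3 : (7389/2000 : ℝ) < c := by nlinarith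
    have h8 : x*s ≤ x*c := by nlinarith
    have h9 : 0 ≤ (x*c - x*s) * (6*c^5 + 18*c*(1+c) + 3*c^3*(1+c)) := mul_nonneg (by linarith) hKpos.le
    have hxb : x ≤ 2000/7389*c + 1 := by nlinarith
    nlinarith [h9, tail_poly hc3 hx2 hxb]

lemma main_pos {x : ℝ} (hx : 0 < x) :
    Real.cosh x + 5 * (Real.cosh x)⁻¹ ^ 3 - 6 * (Real.cosh x)⁻¹ ^ 5
      - 6 * x * (3 * bm5 x - 2 * bm3 x) > 0 := by
  have hc1 : 1 < Real.cosh x := Real.one_lt_cosh.2 (ne_of_gt hx)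
  have hc0 : (0:ℝ) < Real.cosh x := by linarith
  have hs0 : 0 < Real.sinh x := Real.sinh_pos_iff.2 hx
  have hs2 : Real.sinh x ^ 2 = Real.cosh x ^ 2 - 1 := Real.sinh_sq x
  have hxs : x < Real.sinh x := Real.self_lt_sinh_iff.2 hx
  have hA : Real.arctan (Real.sinh x) < 2 * Real.sinh x / (1 + Real.cosh x) := arctan_sinh_lt hx
  have h1c : (0:ℝ) < 1 + Real.cosh x := by linarith
  set s := Real.sinh x with hsdef
  set c := Real.cosh x with hcdef
  have hP := key_poly hx hc1 hs0 hs2 hxs hcdef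
  have hK : 0 < c + 5 * c⁻¹ ^ 3 - 6 * c⁻¹ ^ 5
      - ((3/2) * x * s / (1 + c) + (9/2) * x * s * c⁻¹ ^ 4 + (3/4) * x * s * c⁻¹ ^ 2) := by
    have heq : c + 5 * c⁻¹ ^ 3 - 6 * c⁻¹ ^ 5
        - ((3/2) * x * s / (1 + c) + (9/2) * x * s * c⁻¹ ^ 4 + (3/4) * x * s * c⁻¹ ^ 2)
        = (4*c^6*(1+c) + 20*c^2*(1+c) - 24*(1+c)
          - x*s*(6*c^5 + 18*c*(1+c) + 3*c^3*(1+c))) / (4 * c ^ 5 * (1 + c)) := by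
      field_simp
      ring
    rw [heq]
    exact div_pos hP (by positivity)
  have hexpand : Real.cosh x + 5 * (Real.cosh x)⁻¹ ^ 3 - 6 * (Real.cosh x)⁻¹ ^ 5
      - 6 * x * (3 * bm5 x - 2 * bm3 x)
      = (c + 5 * c⁻¹ ^ 3 - 6 * c⁻¹ ^ 5
        - ((3/2) * x * s / (1 + c) + (9/2) * x * s * c⁻¹ ^ 4 + (3/4) * x * s * c⁻¹ ^ 2))
        + (3/4) * (x * (2 * s / (1 + c)) - x * Real.arctan s) := by
    simp only [bm3, bm5, ← hsdef, ← hcdef]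
    field_simp
    ring
  rw [hexpand]
  have hAB : x * Real.arctan s < x * (2 * s / (1 + c)) := by
    exact mul_lt_mul_of_pos_left hA hx
  linarith

theorem stmt_2 (x : ℝ) (hx : x ≠ 0) :
    Real.cosh x + 5 * (Real.cosh x)⁻¹ ^ 3 - 6 * (Real.cosh x)⁻¹ ^ 5
      - 6 * x * (3 * bm5 x - 2 * bm3 x) > 0 := by
  rcases hx.lt_or_gt with hneg | hpos
  · have key := main_pos (x := -x) (by linarith)
    have heven : Real.cosh x + 5 * (Real.cosh x)⁻¹ ^ 3 - 6 * (Real.cosh x)⁻¹ ^ 5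
        - 6 * x * (3 * bm5 x - 2 * bm3 x)
        = Real.cosh (-x) + 5 * (Real.cosh (-x))⁻¹ ^ 3 - 6 * (Real.cosh (-x))⁻¹ ^ 5
        - 6 * (-x) * (3 * bm5 (-x) - 2 * bm3 (-x)) := by
      simp only [bm3, bm5, Real.cosh_neg, Real.sinh_neg, Real.arctan_neg]
      ring
    rw [heven]
    exact key
  · exact main_pos hpos
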